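/- arXiv:1006.2158 — 7 statements merged into one kernel-verified Lean document; each statement's English description precedes it below -/
import Mathlib

section
/- Let (X,d) be a possibly non-symmetric metric space with base-point b. Define the detour metric δ(ξ,η) := H(ξ,η) + H(η,ξ) on the set of Busemann points (horofunctions ξ with H(ξ,ξ) = 0). Then δ is a possibly infinity-valued metric: δ is symmetric, δ(ξ,ξ) = 0, δ satisfies the triangle inequality, and δ(ξ,η) = 0 implies ξ = η. -/
/-!
Horofunctions are 1-Lipschitz for `d`, which yields the key inequality
`η x ≤ ξ x + H(ξ,η)`. Applied along a sequence converging to `ξ` it gives the triangle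
inequality `H(ξ,ν) ≤ H(ξ,η) + H(η,ν)`, and applied in both directions it shows that
`H(ξ,η) = H(η,ξ) = 0` forces `ξ = η`. Since `H ≥ 0`, both pass to `δ`.
-/

open Filter Topology

/-- The detour cost `H(ξ,η)`, valued in `EReal`. -/
noncomputable def detourCost {X : Type*} (d : X → X → ℝ) (b : X) (ξ η : X → ℝ) : EReal :=
  sInf { c : EReal | ∃ z : ℕ → X,
    (∀ x, Filter.Tendsto (fun n => d x (z n) - d b (z n)) Filter.atTop (nhds (ξ x))) ∧
    c = Filter.liminf (fun n => ((d b (z n) + η (z n) : ℝ) : EReal)) Filter.atTop }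

/-- The detour metric `δ(ξ,η) = H(ξ,η) + H(η,ξ)`. -/
noncomputable def detourMetric {X : Type*} (d : X → X → ℝ) (b : X) (ξ η : X → ℝ) : EReal :=
  detourCost d b ξ η + detourCost d b η ξ

namespace EReal

lemma le_sInf_add {S : Set EReal} {a k : EReal} (hS : sInf S ≠ ⊥) (hk : k ≠ ⊥)
    (h : ∀ s ∈ S, a ≤ s + k) : a ≤ sInf S + k := by
  rcases eq_or_ne k ⊤ with rfl | hk_top
  · simp [EReal.add_top_of_ne_bot hS]
  · rw [← EReal.sub_le_iff_le_add (.inl hk) (.inl hk_top)]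
    exact le_sInf fun s hs => (EReal.sub_le_iff_le_add (.inl hk) (.inl hk_top)).2 (h s hs)

lemma liminf_le_liminf_add {ι : Type*} {f : Filter ι} [f.NeBot] {u v : ι → EReal} {k : EReal}
    (h : ∀ i, u i ≤ v i + k) (hk : k ≠ ⊥) (hv : liminf v f ≠ ⊥) :
    liminf u f ≤ liminf v f + k :=
  calc liminf u f ≤ liminf ((fun _ => k) + v) f :=
        liminf_le_liminf (.of_forall fun i => (h i).trans_eq (add_comm _ _))
    _ ≤ limsup (fun _ => k) f + liminf v f :=
        EReal.liminf_add_le (by simp [hk]) (by simp [hv])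
    _ = liminf v f + k := by rw [limsup_const, add_comm]

end EReal

section Horofunction

def TendstoHorofunction {X : Type*} (d : X → X → ℝ) (b : X) (z : ℕ → X) (ξ : X → ℝ) :
    Prop :=
  ∀ x, Tendsto (fun n => d x (z n) - d b (z n)) atTop (𝓝 (ξ x))

def IsHorofunction {X : Type*} (d : X → X → ℝ) (b : X) (ξ : X → ℝ) : Prop :=
  ∃ z, TendstoHorofunction d b z ξ

variable {X : Type*} {d : X → X → ℝ} {b : X} {ξ η ν : X → ℝ}

lemma IsHorofunction.neg_dist_le (htri : ∀ x y z, d x z ≤ d x y + d y z)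
    (hη : IsHorofunction d b η) (x : X) : -d b x ≤ η x := by
  obtain ⟨z, hz⟩ := hη
  refine ge_of_tendsto (hz x) (.of_forall fun n => ?_)
  linarith [htri b x (z n)]

lemma IsHorofunction.le_dist_add (htri : ∀ x y z, d x z ≤ d x y + d y z)
    (hη : IsHorofunction d b η) (x y : X) : η x ≤ d x y + η y := by
  obtain ⟨z, hz⟩ := hη
  refine le_of_tendsto_of_tendsto' (hz x) (tendsto_const_nhds.add (hz y)) fun n => ?_
  linarith [htri x y (z n)]

lemma detourCost_le_liminf {z : ℕ → X} (hz : TendstoHorofunction d b z ξ) :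
    detourCost d b ξ η ≤ liminf (fun n => ((d b (z n) + η (z n) : ℝ) : EReal)) atTop :=
  sInf_le ⟨z, hz, rfl⟩

lemma le_detourCost {c : EReal}
    (h : ∀ z, TendstoHorofunction d b z ξ →
      c ≤ liminf (fun n => ((d b (z n) + η (z n) : ℝ) : EReal)) atTop) :
    c ≤ detourCost d b ξ η :=
  le_sInf fun _ ⟨z, hz, hc⟩ => hc ▸ h z hz

lemma le_detourCost_add {a k : EReal} (hH : detourCost d b ξ η ≠ ⊥) (hk : k ≠ ⊥)
    (h : ∀ z, TendstoHorofunction d b z ξ →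
      a ≤ liminf (fun n => ((d b (z n) + η (z n) : ℝ) : EReal)) atTop + k) :
    a ≤ detourCost d b ξ η + k :=
  EReal.le_sInf_add hH hk fun _ ⟨z, hz, hc⟩ => hc ▸ h z hz

lemma liminf_dist_add_nonneg (htri : ∀ x y z, d x z ≤ d x y + d y z)
    (hη : IsHorofunction d b η) (z : ℕ → X) :
    0 ≤ liminf (fun n => ((d b (z n) + η (z n) : ℝ) : EReal)) atTop :=
  le_liminf_of_le (by isBoundedDefault) (.of_forall fun n => EReal.coe_nonneg.2 <| by
    linarith [hη.neg_dist_le htri (z n)])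

lemma detourCost_nonneg (htri : ∀ x y z, d x z ≤ d x y + d y z)
    (hη : IsHorofunction d b η) : 0 ≤ detourCost d b ξ η :=
  le_detourCost fun z _ => liminf_dist_add_nonneg htri hη z

lemma IsHorofunction.le_add_detourCost (htri : ∀ x y z, d x z ≤ d x y + d y z)
    (hη : IsHorofunction d b η) (x : X) : (η x : EReal) ≤ ξ x + detourCost d b ξ η := by
  have hsub : ((η x - ξ x : ℝ) : EReal) ≤ detourCost d b ξ η := by
    refine le_detourCost fun z hz => ?_
    have hlim : Tendsto (fun n => ((η x - (d x (z n) - d b (z n)) : ℝ) : EReal)) atTop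
        (𝓝 ((η x - ξ x : ℝ) : EReal)) :=
      (continuous_coe_real_ereal.tendsto _).comp (tendsto_const_nhds.sub (hz x))
    rw [← hlim.liminf_eq]
    refine liminf_le_liminf (.of_forall fun n => EReal.coe_le_coe_iff.2 ?_)
    linarith [hη.le_dist_add htri x (z n)]
  calc (η x : EReal) = ξ x + ((η x - ξ x : ℝ) : EReal) := by rw [← EReal.coe_add]; ring_nf
    _ ≤ ξ x + detourCost d b ξ η := add_le_add_right hsub _

lemma detourCost_le_add (htri : ∀ x y z, d x z ≤ d x y + d y z)
    (hη : IsHorofunction d b η) (hν : IsHorofunction d b ν) :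
    detourCost d b ξ ν ≤ detourCost d b ξ η + detourCost d b η ν := by
  have hH := detourCost_nonneg (ξ := ξ) htri hη
  have hk := detourCost_nonneg (ξ := η) htri hν
  refine le_detourCost_add (ne_bot_of_le_ne_bot (by simp) hH) (ne_bot_of_le_ne_bot (by simp) hk)
    fun z hz => (detourCost_le_liminf hz).trans ?_
  refine EReal.liminf_le_liminf_add (fun n => ?_) (ne_bot_of_le_ne_bot (by simp) hk)
    (ne_bot_of_le_ne_bot (by simp) (liminf_dist_add_nonneg htri hη z))
  calc ((d b (z n) + ν (z n) : ℝ) : EReal) = d b (z n) + ν (z n) := EReal.coe_add _ _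
    _ ≤ d b (z n) + (η (z n) + detourCost d b η ν) :=
      add_le_add_right (hν.le_add_detourCost htri (z n)) _
    _ = ((d b (z n) + η (z n) : ℝ) : EReal) + detourCost d b η ν := by
      rw [EReal.coe_add, add_assoc]

lemma detourMetric_comm : detourMetric d b ξ η = detourMetric d b η ξ :=
  add_comm _ _

lemma detourMetric_self (hξ : detourCost d b ξ ξ = 0) : detourMetric d b ξ ξ = 0 := by
  rw [detourMetric, hξ, add_zero]

lemma detourMetric_le_add (htri : ∀ x y z, d x z ≤ d x y + d y z)
    (hξ : IsHorofunction d b ξ) (hη : IsHorofunction d b η) (hν : IsHorofunction d b ν) :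
    detourMetric d b ξ ν ≤ detourMetric d b ξ η + detourMetric d b η ν :=
  calc detourMetric d b ξ ν
      ≤ (detourCost d b ξ η + detourCost d b η ν) + (detourCost d b ν η + detourCost d b η ξ) :=
        add_le_add (detourCost_le_add htri hη hν) (detourCost_le_add htri hη hξ)
    _ = detourMetric d b ξ η + detourMetric d b η ν := by simp only [detourMetric]; abel

lemma eq_of_detourMetric_eq_zero (htri : ∀ x y z, d x z ≤ d x y + d y z)
    (hξ : IsHorofunction d b ξ) (hη : IsHorofunction d b η) (h : detourMetric d b ξ η = 0) :
    ξ = η := by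
  obtain ⟨hξη, hηξ⟩ := (add_eq_zero_iff_of_nonneg (detourCost_nonneg htri hη)
    (detourCost_nonneg htri hξ)).1 h
  funext x
  have hle := hη.le_add_detourCost (ξ := ξ) htri x
  have hge := hξ.le_add_detourCost (ξ := η) htri x
  rw [hξη, add_zero] at hle
  rw [hηξ, add_zero] at hge
  exact le_antisymm (EReal.coe_le_coe_iff.1 hge) (EReal.coe_le_coe_iff.1 hle)

end Horofunction

theorem detourMetric_is_metric_general {X : Type*} (d : X → X → ℝ) (b : X)
    (htri : ∀ x y z, d x z ≤ d x y + d y z)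
    (ξ η ν : X → ℝ)
    (hξ : ∃ z : ℕ → X,
      ∀ x, Filter.Tendsto (fun n => d x (z n) - d b (z n)) Filter.atTop (nhds (ξ x)))
    (hη : ∃ z : ℕ → X,
      ∀ x, Filter.Tendsto (fun n => d x (z n) - d b (z n)) Filter.atTop (nhds (η x)))
    (hν : ∃ z : ℕ → X,
      ∀ x, Filter.Tendsto (fun n => d x (z n) - d b (z n)) Filter.atTop (nhds (ν x)))
    (hξB : detourCost d b ξ ξ = 0) :
    detourMetric d b ξ η = detourMetric d b η ξ ∧
    detourMetric d b ξ ξ = 0 ∧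
    detourMetric d b ξ ν ≤ detourMetric d b ξ η + detourMetric d b η ν ∧
    (detourMetric d b ξ η = 0 → ξ = η) :=
  ⟨detourMetric_comm, detourMetric_self hξB, detourMetric_le_add htri hξ hη hν,
    eq_of_detourMetric_eq_zero htri hξ hη⟩

/-- on Busemann points (horofunctions `ξ` with `H(ξ,ξ) = 0`), the detour
metric `δ` is a possibly `∞`-valued metric: symmetric, zero on the diagonal, satisfying
the triangle inequality, and separating points. -/
theorem detourMetric_is_metric {X : Type*} (d : X → X → ℝ) (b : X)
    (hpos : ∀ x y, 0 ≤ d x y) (hzero : ∀ x y, d x y = 0 ↔ x = y)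
    (htri : ∀ x y z, d x z ≤ d x y + d y z)
    (ξ η ν : X → ℝ)
    (hξ : ∃ z : ℕ → X,
      ∀ x, Filter.Tendsto (fun n => d x (z n) - d b (z n)) Filter.atTop (nhds (ξ x)))
    (hη : ∃ z : ℕ → X,
      ∀ x, Filter.Tendsto (fun n => d x (z n) - d b (z n)) Filter.atTop (nhds (η x)))
    (hν : ∃ z : ℕ → X,
      ∀ x, Filter.Tendsto (fun n => d x (z n) - d b (z n)) Filter.atTop (nhds (ν x)))
    (hξB : detourCost d b ξ ξ = 0) (hηB : detourCost d b η η = 0)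
    (hνB : detourCost d b ν ν = 0) :
    detourMetric d b ξ η = detourMetric d b η ξ ∧
    detourMetric d b ξ ξ = 0 ∧
    detourMetric d b ξ ν ≤ detourMetric d b ξ η + detourMetric d b η ν ∧
    (detourMetric d b ξ η = 0 → ξ = η) :=
  detourMetric_is_metric_general d b htri ξ η ν hξ hη hν hξB
end

section
/- Let f be an isometry from a possibly non-symmetric metric space (X,d) with base-point b to (X',d') with base-point b'. Then the detour costs are related by H'(f·ξ, f·η) = ξ(f⁻¹(b')) + H(ξ,η) − η(f⁻¹(b')) for all horofunctions ξ, η of X, where f·ξ(x') = ξ(f⁻¹(x')) − ξ(f⁻¹(b')). In particular, the detour metric satisfies δ'(f·ξ, f·η) = δ(ξ,η). -/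
/-!
An isometry `e : X ≃ X'` identifies sequences in `X'` with sequences in `X`, so it carries the
detour cost over unchanged once the base point `b'` is pulled back to `e⁻¹ b'`. Moving the base
point from `b` to `c` turns a horofunction `ξ` (normalised by `ξ b = 0`) into `ξ - ξ c` without
changing which sequences converge to it, and shifts the integrand `d(c, zₙ) + η(zₙ) - η(c)` of the
detour cost by `d(c, zₙ) - d(b, zₙ) - η(c) → ξ(c) - η(c)`. Adding a real constant commutes with
`liminf` and `sInf` in `EReal`, so the cost shifts by `ξ(c) - η(c)`, which cancels in the
symmetrised detour metric.
-/

open Filter Topology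

namespace EReal

lemma liminf_add_coe_of_tendsto {ι : Type*} {l : Filter ι} [l.NeBot] (u : ι → EReal)
    {t : ι → ℝ} {a : ℝ} (ht : Tendsto t l (𝓝 a)) :
    liminf (fun n => u n + t n) l = liminf u l + a := by
  have htc : Tendsto (fun n => (t n : EReal)) l (𝓝 a) := tendsto_coe.2 ht
  apply le_antisymm
  · have h := liminf_add_le (f := l) (u := fun n => (t n : EReal)) (v := u)
      (.inl (htc.limsup_eq ▸ coe_ne_bot a)) (.inl (htc.limsup_eq ▸ coe_ne_top a))
    rw [htc.limsup_eq, add_comm] at h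
    simpa only [Pi.add_def, add_comm] using h
  · calc liminf u l + a = liminf u l + liminf (fun n => (t n : EReal)) l := by
          rw [htc.liminf_eq]
      _ ≤ _ := le_liminf_add

lemma sInf_image_add_coe (S : Set EReal) (a : ℝ) :
    sInf ((· + (a : EReal)) '' S) = sInf S + a := by
  have hcont : ContinuousAt (· + (a : EReal)) (sInf S) :=
    (continuousAt_add (p := (sInf S, a)) (.inr (coe_ne_bot a)) (.inr (coe_ne_top a))).comp
      (f := fun x => (x, (a : EReal))) (by fun_prop)
  exact (Monotone.map_sInf_of_continuousAt hcont (fun _ _ h => add_le_add_left h _)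
    (top_add_coe a)).symm

end EReal

lemma tendsto_sub_sub_iff_of_apply_eq_zero {ι X G : Type*} [AddCommGroup G] [TopologicalSpace G]
    [IsTopologicalAddGroup G] {l : Filter ι} (u : X → ι → G) {ξ : X → G} {b : X}
    (hξ : ξ b = 0) (c : X) :
    (∀ x, Tendsto (fun n => u x n - u c n) l (𝓝 (ξ x - ξ c))) ↔
      ∀ x, Tendsto (fun n => u x n - u b n) l (𝓝 (ξ x)) := by
  constructor
  · intro h x
    simpa only [sub_sub_sub_cancel_right, hξ, sub_zero] using (h x).sub (h b)
  · intro h x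
    simpa only [sub_sub_sub_cancel_right] using (h x).sub (h c)

section Horofunction

variable {X X' : Type*}

lemma apply_basepoint_eq_zero_of_tendsto {ι : Type*} {l : Filter ι} [l.NeBot] {d : X → X → ℝ}
    {b : X} {z : ι → X} {ξ : X → ℝ}
    (hz : ∀ x, Tendsto (fun n => d x (z n) - d b (z n)) l (𝓝 (ξ x))) : ξ b = 0 :=
  tendsto_nhds_unique (hz b) (by simpa only [sub_self] using tendsto_const_nhds)

theorem detourCost_comp_equiv (d' : X' → X' → ℝ) (e : X ≃ X') (b' : X')
    (ξ η : X' → ℝ) :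
    detourCost (fun x y => d' (e x) (e y)) (e.symm b') (ξ ∘ e) (η ∘ e) = detourCost d' b' ξ η := by
  simp only [detourCost, Function.comp_apply, Equiv.apply_symm_apply]
  congr 1
  ext c
  simp only [Set.mem_ofPred_eq, e.forall_congr_left, Equiv.apply_symm_apply]
  constructor
  · rintro ⟨z, hz, rfl⟩
    exact ⟨e ∘ z, hz, rfl⟩
  · rintro ⟨w, hw, rfl⟩
    refine ⟨e.symm ∘ w, ?_⟩
    simpa only [Function.comp_apply, Equiv.apply_symm_apply, and_true] using hw

theorem detourCost_change_basepoint (d : X → X → ℝ) {b : X} {ξ : X → ℝ} (hξ : ξ b = 0)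
    (η : X → ℝ) (c : X) :
    detourCost d c (fun x => ξ x - ξ c) (fun x => η x - η c) =
      detourCost d b ξ η + ((ξ c - η c : ℝ) : EReal) := by
  have hconv (z : ℕ → X) :
      (∀ x, Tendsto (fun n => d x (z n) - d c (z n)) atTop (𝓝 (ξ x - ξ c))) ↔
        ∀ x, Tendsto (fun n => d x (z n) - d b (z n)) atTop (𝓝 (ξ x)) :=
    tendsto_sub_sub_iff_of_apply_eq_zero (fun x n => d x (z n)) hξ c
  have hliminf (z : ℕ → X) (hz : ∀ x, Tendsto (fun n => d x (z n) - d b (z n)) atTop (𝓝 (ξ x))) :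
      liminf (fun n => ((d c (z n) + (η (z n) - η c) : ℝ) : EReal)) atTop =
        liminf (fun n => ((d b (z n) + η (z n) : ℝ) : EReal)) atTop + ((ξ c - η c : ℝ) : EReal) := by
    rw [← EReal.liminf_add_coe_of_tendsto _ ((hz c).sub_const (η c))]
    congr with n
    rw [← EReal.coe_add]
    ring_nf
  rw [detourCost, detourCost, ← EReal.sInf_image_add_coe]
  congr 1
  ext v
  simp only [Set.mem_ofPred_eq, Set.mem_image, hconv]
  constructor
  · rintro ⟨z, hz, rfl⟩
    exact ⟨_, ⟨z, hz, rfl⟩, (hliminf z hz).symm⟩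
  · rintro ⟨_, ⟨z, hz, rfl⟩, rfl⟩
    exact ⟨z, hz, (hliminf z hz).symm⟩

theorem detourCost_isometry (d : X → X → ℝ) (d' : X' → X' → ℝ) (b : X) (b' : X')
    (e : X ≃ X') (he : ∀ x y, d' (e x) (e y) = d x y) {ξ : X → ℝ} (hξ : ξ b = 0) (η : X → ℝ) :
    detourCost d' b' (fun x' => ξ (e.symm x') - ξ (e.symm b'))
        (fun x' => η (e.symm x') - η (e.symm b')) =
      detourCost d b ξ η + ((ξ (e.symm b') - η (e.symm b') : ℝ) : EReal) := by
  rw [← detourCost_comp_equiv d' e b', funext₂ he]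
  simpa only [Function.comp_def, Equiv.symm_apply_apply] using
    detourCost_change_basepoint d hξ η (e.symm b')

end Horofunction

theorem detourCost_isometry_invariance_general {X X' : Type*}
    (d : X → X → ℝ) (d' : X' → X' → ℝ) (b : X) (b' : X')
    (e : X ≃ X') (he : ∀ x y, d' (e x) (e y) = d x y)
    (ξ η : X → ℝ)
    (hξ : ∃ z : ℕ → X,
      ∀ x, Filter.Tendsto (fun n => d x (z n) - d b (z n)) Filter.atTop (nhds (ξ x)))
    (hη : ∃ z : ℕ → X,
      ∀ x, Filter.Tendsto (fun n => d x (z n) - d b (z n)) Filter.atTop (nhds (η x))) :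
    detourCost d' b' (fun x' => ξ (e.symm x') - ξ (e.symm b'))
        (fun x' => η (e.symm x') - η (e.symm b'))
      = (ξ (e.symm b') : EReal) + detourCost d b ξ η - (η (e.symm b') : EReal) ∧
    detourMetric d' b' (fun x' => ξ (e.symm x') - ξ (e.symm b'))
        (fun x' => η (e.symm x') - η (e.symm b'))
      = detourMetric d b ξ η := by
  obtain ⟨z, hz⟩ := hξ
  obtain ⟨w, hw⟩ := hη
  have hξη := detourCost_isometry d d' b b' e he (apply_basepoint_eq_zero_of_tendsto hz) η
  have hηξ := detourCost_isometry d d' b b' e he (apply_basepoint_eq_zero_of_tendsto hw) ξ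
  constructor
  · rw [hξη, EReal.coe_sub, sub_eq_add_neg, sub_eq_add_neg, ← add_assoc,
      add_comm (detourCost d b ξ η)]
  · rw [detourMetric, detourMetric, hξη, hηξ, add_add_add_comm, ← EReal.coe_add,
      sub_add_sub_cancel', sub_self, EReal.coe_zero, add_zero]

/-- an isometry `f` between possibly non-symmetric metric spaces transforms
the detour cost by `H'(f·ξ, f·η) = ξ(f⁻¹ b') + H(ξ,η) - η(f⁻¹ b')`, where
`f·ξ (x') = ξ (f⁻¹ x') - ξ (f⁻¹ b')`; in particular `δ'(f·ξ, f·η) = δ(ξ,η)`. -/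
theorem detourCost_isometry_invariance {X X' : Type*}
    (d : X → X → ℝ) (d' : X' → X' → ℝ) (b : X) (b' : X')
    (hpos : ∀ x y, 0 ≤ d x y) (hzero : ∀ x y, d x y = 0 ↔ x = y)
    (htri : ∀ x y z, d x z ≤ d x y + d y z)
    (hpos' : ∀ x y, 0 ≤ d' x y) (hzero' : ∀ x y, d' x y = 0 ↔ x = y)
    (htri' : ∀ x y z, d' x z ≤ d' x y + d' y z)
    (e : X ≃ X') (he : ∀ x y, d' (e x) (e y) = d x y)
    (ξ η : X → ℝ)
    (hξ : ∃ z : ℕ → X,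
      ∀ x, Filter.Tendsto (fun n => d x (z n) - d b (z n)) Filter.atTop (nhds (ξ x)))
    (hη : ∃ z : ℕ → X,
      ∀ x, Filter.Tendsto (fun n => d x (z n) - d b (z n)) Filter.atTop (nhds (η x))) :
    detourCost d' b' (fun x' => ξ (e.symm x') - ξ (e.symm b'))
        (fun x' => η (e.symm x') - η (e.symm b'))
      = (ξ (e.symm b') : EReal) + detourCost d b ξ η - (η (e.symm b') : EReal) ∧
    detourMetric d' b' (fun x' => ξ (e.symm x') - ξ (e.symm b'))
        (fun x' => η (e.symm x') - η (e.symm b'))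
      = detourMetric d b ξ η :=
  detourCost_isometry_invariance_general d d' b b' e he ξ η hξ hη
end

section
/- Let γ : ℝ≥0 → X be an almost-geodesic in a possibly non-symmetric metric space (X,d) converging pointwise (via φ_{γ(t)}) to a function ξ, and let y ∈ X. Then lim_{t→∞} ( d(y,γ(t)) + ξ(γ(t)) ) = ξ(y). -/
open Filter

/-- if `γ : ℝ≥0 → X` is an almost-geodesic converging (via `φ_{γ t}`)
to `ξ`, then for every `y`, `d y (γ t) + ξ (γ t) → ξ y` as `t → ∞`. -/
theorem almost_geodesic_limit {X : Type*} (d : X → X → ℝ) (b : X)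
    (hpos : ∀ x y, 0 ≤ d x y) (hzero : ∀ x y, d x y = 0 ↔ x = y)
    (htri : ∀ x y z, d x z ≤ d x y + d y z)
    (γ : ℝ → X) (ξ : X → ℝ)
    (hgeo : ∀ ε > (0:ℝ), ∃ T : ℝ, ∀ s t : ℝ, T ≤ s → s ≤ t →
      |d (γ 0) (γ s) + d (γ s) (γ t) - t| < ε)
    (hconv : ∀ x, Filter.Tendsto (fun t => d x (γ t) - d b (γ t)) Filter.atTop
      (nhds (ξ x)))
    (y : X) :
    Filter.Tendsto (fun t => d y (γ t) + ξ (γ t)) Filter.atTop (nhds (ξ y)) := by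
  have hlow : ∀ s : ℝ, ξ y ≤ d y (γ s) + ξ (γ s) := by
    intro s
    have h2 : Tendsto (fun t => d y (γ s) + (d (γ s) (γ t) - d b (γ t))) atTop
        (nhds (d y (γ s) + ξ (γ s))) := tendsto_const_nhds.add (hconv (γ s))
    refine le_of_tendsto_of_tendsto (hconv y) h2 ?_
    filter_upwards with t
    have := htri y (γ s) (γ t)
    linarith
  rw [Metric.tendsto_atTop]
  intro ε' hε'
  have hε : 0 < ε' / 7 := by positivity
  set ε := ε' / 7 with hεdef
  obtain ⟨T, hT⟩ := hgeo ε hε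
  have hT0 : ∀ t, T ≤ t → |d (γ 0) (γ t) - t| < ε := by
    intro t ht
    have h := hT t t ht le_rfl
    have hz : d (γ t) (γ t) = 0 := (hzero _ _).2 rfl
    rw [hz] at h
    simpa using h
  have hst : ∀ s t, T ≤ s → s ≤ t →
      d (γ s) (γ t) ≤ d (γ 0) (γ t) + 2 * ε - d (γ 0) (γ s) := by
    intro s t hs hstt
    have h1 := hT s t hs hstt
    have h2 := hT0 t (le_trans hs hstt)
    rw [abs_lt] at h1 h2
    linarith [h1.1, h1.2, h2.1, h2.2]
  have hxis : ∀ s, T ≤ s → ξ (γ s) ≤ ξ (γ 0) + 2 * ε - d (γ 0) (γ s) := by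
    intro s hs
    have h2 : Tendsto (fun t => d (γ 0) (γ t) - d b (γ t) + (2 * ε - d (γ 0) (γ s)))
        atTop (nhds (ξ (γ 0) + (2 * ε - d (γ 0) (γ s)))) :=
      (hconv (γ 0)).add tendsto_const_nhds
    have h3 := le_of_tendsto_of_tendsto (hconv (γ s)) h2 ?_
    · linarith
    · filter_upwards [eventually_ge_atTop s] with t ht
      have := hst s t hs ht
      linarith
  obtain ⟨S1, hS1⟩ := (Metric.tendsto_atTop.1 (hconv y)) ε hε
  obtain ⟨S2, hS2⟩ := (Metric.tendsto_atTop.1 (hconv (γ 0))) ε hε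
  refine ⟨max T (max S1 S2), fun s hs => ?_⟩
  set s₀ := max T (max S1 S2) with hs₀def
  have hs₀T : T ≤ s₀ := le_max_left _ _
  have h1 := hS1 s₀ ((le_max_left S1 S2).trans (le_max_right T _))
  have h2 := hS2 s₀ ((le_max_right S1 S2).trans (le_max_right T _))
  rw [Real.dist_eq, abs_lt] at h1 h2
  have htri1 := htri y (γ s₀) (γ s)
  have hd := hst s₀ s hs₀T hs
  have hx := hxis s (hs₀T.trans hs)
  have hl := hlow s
  rw [Real.dist_eq, abs_lt]
  constructor <;> linarith
end

section
/- Let (X,d) be a possibly non-symmetric metric space of the following form: X is a set of positive continuous functions on a compact space K (thought of as length functions ℓ_x on projective measured laminations), and d(x,y) = log sup_{k ∈ K} ℓ_y(k)/ℓ_x(k), where each ℓ_x : K → (0,∞) is continuous and the supremum is attained. For x,y ∈ X let R_{xy} ⊆ K denote the set where ℓ_y/ℓ_x attains its maximum. Then for x, y, z ∈ X: d(x,y) + d(y,z) = d(x,z) if and only if R_{xy} ∩ R_{yz} ≠ ∅, and in that case R_{xy} ∩ R_{yz} = R_{xz}. -/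
private lemma mul_eq_of_le {a b A B : ℝ} (ha : 0 < a) (hb : 0 < b)
    (hA : a ≤ A) (hB : b ≤ B) (h : A * B ≤ a * b) : a = A ∧ b = B := by
  constructor
  · nlinarith
  · nlinarith

/-- for the metric `d x y = log max_{k ∈ K} ℓ y k / ℓ x k` on a family of
positive continuous functions on a compact space `K` (abstracting Thurston's Lipschitz
metric), with `R_{xy} ⊆ K` the set where `ℓ y / ℓ x` attains its maximum:
`d x y + d y z = d x z` iff `R_{xy} ∩ R_{yz} ≠ ∅`, in which case
`R_{xy} ∩ R_{yz} = R_{xz}`. -/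
theorem thurston_metric_additivity {X K : Type*} [TopologicalSpace K] [CompactSpace K]
    [Nonempty K]
    (ℓ : X → K → ℝ) (hcont : ∀ x, Continuous (ℓ x)) (hpos : ∀ x k, 0 < ℓ x k)
    (d : X → X → ℝ)
    (hd : ∀ x y, IsGreatest { r : ℝ | ∃ k : K, r = ℓ y k / ℓ x k } (Real.exp (d x y)))
    (hnonneg : ∀ x y, 0 ≤ d x y)
    (x y z : X) :
    (d x y + d y z = d x z ↔
      ({ k : K | ℓ y k / ℓ x k = Real.exp (d x y) } ∩
        { k : K | ℓ z k / ℓ y k = Real.exp (d y z) }).Nonempty) ∧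
    (d x y + d y z = d x z →
      { k : K | ℓ y k / ℓ x k = Real.exp (d x y) } ∩
        { k : K | ℓ z k / ℓ y k = Real.exp (d y z) }
      = { k : K | ℓ z k / ℓ x k = Real.exp (d x z) }) := by
  -- basic facts
  have hub : ∀ a b : X, ∀ k : K, ℓ b k / ℓ a k ≤ Real.exp (d a b) := by
    intro a b k
    exact (hd a b).2 ⟨k, rfl⟩
  have hsplit : ∀ k : K, ℓ z k / ℓ x k = (ℓ y k / ℓ x k) * (ℓ z k / ℓ y k) := by
    intro k
    rw [div_mul_div_comm, mul_comm (ℓ x k) (ℓ y k),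
      mul_div_mul_left _ _ (hpos y k).ne']
  -- d x z ≤ d x y + d y z always
  have hle : Real.exp (d x z) ≤ Real.exp (d x y) * Real.exp (d y z) := by
    obtain ⟨k, hk⟩ := (hd x z).1
    rw [hk, hsplit k]
    exact mul_le_mul (hub x y k) (hub y z k) (le_of_lt (div_pos (hpos z k) (hpos y k)))
      (Real.exp_pos _).le
  -- If additivity holds, any maximizer of ℓz/ℓx lies in the intersection
  have key : d x y + d y z = d x z →
      ∀ k : K, ℓ z k / ℓ x k = Real.exp (d x z) →
        ℓ y k / ℓ x k = Real.exp (d x y) ∧ ℓ z k / ℓ y k = Real.exp (d y z) := by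
    intro hadd k hk
    have h1 : Real.exp (d x y) * Real.exp (d y z)
        ≤ (ℓ y k / ℓ x k) * (ℓ z k / ℓ y k) := by
      rw [← hsplit k, hk, ← Real.exp_add, hadd]
    exact mul_eq_of_le (div_pos (hpos y k) (hpos x k)) (div_pos (hpos z k) (hpos y k))
      (hub x y k) (hub y z k) h1
  have fwd : d x y + d y z = d x z →
      ({ k : K | ℓ y k / ℓ x k = Real.exp (d x y) } ∩
        { k : K | ℓ z k / ℓ y k = Real.exp (d y z) }).Nonempty := by
    intro hadd
    obtain ⟨k, hk⟩ := (hd x z).1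
    exact ⟨k, key hadd k hk.symm⟩
  constructor
  · constructor
    · exact fwd
    · rintro ⟨k, hk1, hk2⟩
      have h2 : Real.exp (d x y) * Real.exp (d y z) ≤ Real.exp (d x z) := by
        calc Real.exp (d x y) * Real.exp (d y z) = ℓ z k / ℓ x k := by
              rw [hsplit k, hk1, hk2]
          _ ≤ Real.exp (d x z) := hub x z k
      have : Real.exp (d x y + d y z) = Real.exp (d x z) := by
        rw [Real.exp_add]; linarith
      exact Real.exp_injective this
  · intro hadd
    ext k
    simp only [Set.mem_inter_iff, Set.mem_setOf_eq]
    constructor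
    · rintro ⟨hk1, hk2⟩
      rw [hsplit k, hk1, hk2, ← Real.exp_add, hadd]
    · exact key hadd k
end

section
/- Let (X,d) be a possibly non-symmetric metric space with base-point b, satisfying: the symmetrised metric d̂(x,y) = d(x,y)+d(y,x) is proper (closed balls compact), any two points are joined by a geodesic for d, and d(x_n,x) → 0 iff d(x,x_n) → 0 for sequences. If a sequence (x_n) in X is such that φ_{x_n} converges pointwise to a function ξ that is not of the form φ_y for any y ∈ X, then d̂(b,x_n) → ∞; i.e., only finitely many x_n lie in any closed d̂-ball. -/
/-! If `d̂(b, x n)` does not tend to infinity, properness gives a subsequence converging to some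
`y`. Each `d w ·` is `1`-Lipschitz for `d̂`, so along that subsequence `φ_{x n}` converges
pointwise to `φ_y`, and hence `ξ = φ_y`. -/

open Filter Topology

theorem lipschitzWith_one_of_dist_eq_add_swap {X : Type*} [MetricSpace X] {d : X → X → ℝ}
    (hpos : ∀ x y, 0 ≤ d x y) (htri : ∀ x y z, d x z ≤ d x y + d y z)
    (hdist : ∀ x y : X, dist x y = d x y + d y x) (v : X) :
    LipschitzWith 1 (d v) :=
  LipschitzWith.of_le_add fun x y => by
    linarith [htri v y x, hdist x y, hpos x y]

theorem exists_tendsto_subseq_of_not_tendsto_dist_atTop {X : Type*} [MetricSpace X]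
    [ProperSpace X] {x : ℕ → X} {b : X} (h : ¬Tendsto (fun n => dist b (x n)) atTop atTop) :
    ∃ y, ∃ φ : ℕ → ℕ, StrictMono φ ∧ Tendsto (x ∘ φ) atTop (𝓝 y) := by
  rw [Metric.tendsto_dist_left_atTop_iff, Metric.cobounded_eq_cocompact,
    hasBasis_cocompact.tendsto_right_iff] at h
  simp only [not_forall, Set.mem_compl_iff, not_eventually, not_not, exists_prop] at h
  obtain ⟨K, hK, hfreq⟩ := h
  obtain ⟨y, -, hy⟩ := hK.tendsto_subseq' hfreq
  exact ⟨y, hy⟩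

theorem escapes_to_infinity_of_horofunction_limit_general {X : Type*} [MetricSpace X]
    (d : X → X → ℝ) (b : X)
    (hpos : ∀ x y, 0 ≤ d x y)
    (htri : ∀ x y z, d x z ≤ d x y + d y z)
    (hdist : ∀ x y : X, dist x y = d x y + d y x)
    (hproper : ProperSpace X)
    (x : ℕ → X) (ξ : X → ℝ)
    (hξ : ∀ w, Filter.Tendsto (fun n => d w (x n) - d b (x n)) Filter.atTop
      (nhds (ξ w)))
    (hnot : ¬ ∃ y : X, ξ = fun w => d w y - d b y) :
    Filter.Tendsto (fun n => dist b (x n)) Filter.atTop Filter.atTop := by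
  by_contra hbounded
  obtain ⟨y, φ, hφ, hxy⟩ := exists_tendsto_subseq_of_not_tendsto_dist_atTop hbounded
  have hlip := lipschitzWith_one_of_dist_eq_add_swap hpos htri hdist
  refine hnot ⟨y, funext fun w => tendsto_nhds_unique ((hξ w).comp hφ.tendsto_atTop) ?_⟩
  exact (((hlip w).continuous.sub (hlip b).continuous).tendsto y).comp hxy

/-- in a possibly non-symmetric metric space whose symmetrised metric
`d̂` is proper, in which geodesics for `d` exist, and in which `d(x_n,x) → 0` iff
`d(x,x_n) → 0`, any sequence `x n` with `φ_{x n}` converging pointwise to a function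
not of the form `φ_y` must escape to infinity: `d̂ (b, x n) → ∞`. -/
theorem escapes_to_infinity_of_horofunction_limit {X : Type*} [MetricSpace X]
    (d : X → X → ℝ) (b : X)
    (hpos : ∀ x y, 0 ≤ d x y) (hzero : ∀ x y, d x y = 0 ↔ x = y)
    (htri : ∀ x y z, d x z ≤ d x y + d y z)
    (hdist : ∀ x y : X, dist x y = d x y + d y x)
    (hproper : ProperSpace X)
    (hgeo : ∀ x y : X, ∃ γ : ℝ → X, γ 0 = x ∧ γ (d x y) = y ∧
      ∀ s t : ℝ, 0 ≤ s → s ≤ t → t ≤ d x y → d (γ s) (γ t) = t - s)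
    (htop : ∀ (x : X) (u : ℕ → X),
      Filter.Tendsto (fun n => d (u n) x) Filter.atTop (nhds 0) ↔
        Filter.Tendsto (fun n => d x (u n)) Filter.atTop (nhds 0))
    (x : ℕ → X) (ξ : X → ℝ)
    (hξ : ∀ w, Filter.Tendsto (fun n => d w (x n) - d b (x n)) Filter.atTop
      (nhds (ξ w)))
    (hnot : ¬ ∃ y : X, ξ = fun w => d w y - d b y) :
    Filter.Tendsto (fun n => dist b (x n)) Filter.atTop Filter.atTop :=
  escapes_to_infinity_of_horofunction_limit_general d b hpos htri hdist hproper x ξ hξ hnot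
end

section
/- Let (X,d) be a possibly non-symmetric metric space with base-point b, satisfying: d̂ is proper, geodesics for d exist between any two points, d(x_n,x) → 0 iff d(x,x_n) → 0, and d̂(b,x_n) → ∞ implies d(b,x_n) → ∞. Let ξ be a horofunction such that for every ε > 0 and every x₀ ∈ X there exists x ∈ X arbitrarily far from b with |d(x₀,x) + ξ(x) − ξ(x₀)| < ε and φ_x uniformly close to ξ. Then there exists an almost-geodesic γ : ℝ≥0 → X converging to ξ; i.e., ξ is a Busemann point. -/
/-- under properness, existence of geodesics, the topology condition and
the condition that `d̂(b,x_n) → ∞` implies `d(b,x_n) → ∞`, a horofunction `ξ` such that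
for all `ε > 0`, `x₀` and `R` there is a point `x` with `d̂(b,x) ≥ R`,
`|d(x₀,x) + ξ(x) - ξ(x₀)| < ε`, and `φ_x` within `ε` of `ξ` on the ball of radius `R`
(this is `H(ξ,ξ) = 0` unpacked), is the limit of an almost-geodesic; i.e. `ξ` is a
Busemann point. -/
theorem busemann_of_zero_self_detour {X : Type*} [MetricSpace X]
    (d : X → X → ℝ) (b : X)
    (hpos : ∀ x y, 0 ≤ d x y) (hzero : ∀ x y, d x y = 0 ↔ x = y)
    (htri : ∀ x y z, d x z ≤ d x y + d y z)
    (hdist : ∀ x y : X, dist x y = d x y + d y x)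
    (hproper : ProperSpace X)
    (hgeo : ∀ x y : X, ∃ γ : ℝ → X, γ 0 = x ∧ γ (d x y) = y ∧
      ∀ s t : ℝ, 0 ≤ s → s ≤ t → t ≤ d x y → d (γ s) (γ t) = t - s)
    (htop : ∀ (x : X) (u : ℕ → X),
      Filter.Tendsto (fun n => d (u n) x) Filter.atTop (nhds 0) ↔
        Filter.Tendsto (fun n => d x (u n)) Filter.atTop (nhds 0))
    (hinf : ∀ u : ℕ → X,
      Filter.Tendsto (fun n => dist b (u n)) Filter.atTop Filter.atTop →
        Filter.Tendsto (fun n => d b (u n)) Filter.atTop Filter.atTop)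
    (ξ : X → ℝ)
    (hhoro : ∃ z : ℕ → X,
      (∀ x, Filter.Tendsto (fun n => d x (z n) - d b (z n)) Filter.atTop (nhds (ξ x))) ∧
      Filter.Tendsto (fun n => dist b (z n)) Filter.atTop Filter.atTop)
    (hself : ∀ ε > (0:ℝ), ∀ x₀ : X, ∀ R : ℝ, ∃ x : X, R ≤ dist b x ∧
      |d x₀ x + ξ x - ξ x₀| < ε ∧
      ∀ w : X, dist b w ≤ R → |(d w x - d b x) - ξ w| < ε) :
    ∃ γ : ℝ → X,
      (∀ ε > (0:ℝ), ∃ T : ℝ, ∀ s t : ℝ, T ≤ s → s ≤ t →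
        |d (γ 0) (γ s) + d (γ s) (γ t) - t| < ε) ∧
      ∀ x, Filter.Tendsto (fun t => d x (γ t) - d b (γ t)) Filter.atTop (nhds (ξ x)) := by
  classical
  obtain ⟨z, hz, hzinf⟩ := hhoro
  -- ξ b = 0
  have hxib : ξ b = 0 := by
    have h1 := hz b
    have h2 : Filter.Tendsto (fun n => d b (z n) - d b (z n)) Filter.atTop (nhds 0) := by
      simp only [sub_self]; exact tendsto_const_nhds
    exact tendsto_nhds_unique h1 h2
  -- ξ is "Lipschitz": ξ w ≤ d w y + ξ y
  have hlip : ∀ w y : X, ξ w ≤ d w y + ξ y := by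
    intro w y
    have h2 : Filter.Tendsto (fun n => d w y + (d y (z n) - d b (z n)))
        Filter.atTop (nhds (d w y + ξ y)) := tendsto_const_nhds.add (hz y)
    exact le_of_tendsto_of_tendsto' (hz w) h2 (fun k => by have := htri w y (z k); linarith)
  have hxle : ∀ y : X, -d b y ≤ ξ y := by
    intro y; have := hlip b y; rw [hxib] at this; linarith
  -- strengthened version of hself: can require `R ≤ d b x`
  have hself' : ∀ ε : ℝ, 0 < ε → ∀ x₀ : X, ∀ R : ℝ, ∃ x : X, R ≤ d b x ∧
      |d x₀ x + ξ x - ξ x₀| < ε ∧ ∀ w : X, dist b w ≤ R → |d w x - d b x - ξ w| < ε := by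
    intro ε hε x₀ R
    choose u hu1 hu2 hu3 using fun k : ℕ => hself ε hε x₀ (max R k)
    have hdistu : Filter.Tendsto (fun k => dist b (u k)) Filter.atTop Filter.atTop := by
      refine Filter.tendsto_atTop_mono (fun k => le_trans (le_max_right R (k:ℝ)) (hu1 k)) ?_
      exact tendsto_natCast_atTop_atTop
    obtain ⟨k, hk⟩ := ((hinf u hdistu).eventually_ge_atTop R).exists
    exact ⟨u k, hk, hu2 k, fun w hw => hu3 k w (le_trans hw (le_max_left R (k:ℝ)))⟩
  -- recursive construction of the sequence
  have step : ∀ (n : ℕ) (p : X), ∃ q : X,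
      max (dist b p) ((n:ℝ) + 2 + |ξ p|) ≤ d b q ∧
      |d p q + ξ q - ξ p| < (1/2:ℝ)^(n+1) ∧
      ∀ w : X, dist b w ≤ max (dist b p) ((n:ℝ) + 2 + |ξ p|) →
        |d w q - d b q - ξ w| < (1/2:ℝ)^(n+1) :=
    fun n p => hself' _ (by positivity) p _
  choose f hf1 hf2 hf3 using step
  obtain ⟨x, hx0, hxs⟩ : ∃ x : ℕ → X, x 0 = b ∧ ∀ n, x (n+1) = f n (x n) :=
    ⟨fun n => Nat.rec (motive := fun _ => X) b (fun k p => f k p) n, rfl, fun _ => rfl⟩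
  have e_pos : ∀ n : ℕ, (0:ℝ) < (1/2:ℝ)^n := fun n => by positivity
  have A1 : ∀ n : ℕ, (n:ℝ) + 2 + |ξ (x n)| ≤ d b (x (n+1)) := by
    intro n; rw [hxs n]; exact le_trans (le_max_right _ _) (hf1 n (x n))
  have A2 : ∀ n : ℕ, |d (x n) (x (n+1)) + ξ (x (n+1)) - ξ (x n)| < (1/2:ℝ)^(n+1) := by
    intro n; rw [hxs n]; exact hf2 n (x n)
  have A3 : ∀ (n : ℕ) (w : X), dist b w ≤ (n:ℝ) + 2 →
      |d w (x (n+1)) - d b (x (n+1)) - ξ w| < (1/2:ℝ)^(n+1) := by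
    intro n w hw
    rw [hxs n]
    refine hf3 n (x n) w (le_trans (le_trans hw ?_) (le_max_right _ _))
    have := abs_nonneg (ξ (x n))
    linarith
  obtain ⟨τ, hτn⟩ : ∃ τ : ℕ → ℝ, ∀ n, τ n = -ξ (x n) := ⟨_, fun _ => rfl⟩
  have hτ0 : τ 0 = 0 := by rw [hτn 0, hx0, hxib, neg_zero]
  have A3' : ∀ n : ℕ, |d (x n) (x (n+1)) - d b (x (n+1)) - ξ (x n)| < (1/2:ℝ)^(n+1) := by
    intro n; rw [hxs n]; exact hf3 n (x n) (x n) (le_max_left _ _)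
  have B4 : ∀ n : ℕ, d b (x (n+1)) ≤ τ (n+1) + 2*(1/2:ℝ)^(n+1) := by
    intro n
    have h1 := abs_lt.1 (A2 n)
    have h2 := abs_lt.1 (A3' n)
    have hτ := hτn (n+1)
    obtain ⟨h1a, h1b⟩ := h1; obtain ⟨h2a, h2b⟩ := h2
    linarith
  have hτs : ∀ n : ℕ, τ n + 1 ≤ τ (n+1) := by
    intro n
    have h1 := A1 n
    have h2 := B4 n
    have h3 : (1/2:ℝ)^(n+1) ≤ 1/2 := by
      calc (1/2:ℝ)^(n+1) ≤ (1/2:ℝ)^1 :=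
            pow_le_pow_of_le_one (by norm_num) (by norm_num) (by omega)
        _ = 1/2 := pow_one _
    have h4 : -ξ (x n) ≤ |ξ (x n)| := neg_le_abs _
    have h5 : (0:ℝ) ≤ (n:ℝ) := Nat.cast_nonneg n
    linarith [hτn n, hτn (n+1)]
  have hτmono : ∀ {m n : ℕ}, m ≤ n → τ m ≤ τ n := by
    intro m n h
    exact monotone_nat_of_le_succ (fun k => by linarith [hτs k]) h
  have hτge : ∀ n : ℕ, (n:ℝ) ≤ τ n := by
    intro n; induction n with
    | zero => simp [hτ0]
    | succ k ih => push_cast; linarith [hτs k]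
  have hτnonneg : ∀ n, 0 ≤ τ n := fun n => le_trans (Nat.cast_nonneg n) (hτge n)
  have hdb_ge : ∀ n, τ n ≤ d b (x n) := by
    intro n; have := hxle (x n); linarith [hτn n]
  have hdb_le : ∀ n : ℕ, d b (x n) ≤ τ n + 2*(1/2:ℝ)^n := by
    intro n
    cases n with
    | zero =>
        have h0 : d b (x 0) = 0 := by rw [hx0]; exact (hzero b b).2 rfl
        rw [h0, hτ0]; norm_num
    | succ k => exact B4 k
  have hdstep : ∀ n : ℕ, d (x n) (x (n+1)) ≤ τ (n+1) - τ n + (1/2:ℝ)^(n+1) ∧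
      τ (n+1) - τ n - (1/2:ℝ)^(n+1) ≤ d (x n) (x (n+1)) := by
    intro n
    have := abs_lt.1 (A2 n)
    constructor <;> linarith [this.1, this.2, hτn n, hτn (n+1)]
  have chain : ∀ p q : ℕ, p ≤ q →
      d (x p) (x q) ≤ τ q - τ p + (1/2:ℝ)^p - (1/2:ℝ)^q := by
    intro p q hpq
    induction q, hpq using Nat.le_induction with
    | base =>
        rw [(hzero (x p) (x p)).2 rfl]; linarith
    | succ q hpq ih =>
        have h1 := htri (x p) (x q) (x (q+1))
        have h2 := (hdstep q).1
        have h3 : (1/2:ℝ)^(q+1) = (1/2)*(1/2:ℝ)^q := by ring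
        linarith
  -- geodesics between consecutive points
  choose g hg0 hge hgd using fun n => hgeo (x n) (x (n+1))
  -- the index function
  have exN : ∀ s : ℝ, ∃ n : ℕ, s < τ (n+1) := by
    intro s
    obtain ⟨n, hn⟩ := exists_nat_gt s
    exact ⟨n, hn.trans_le ((hτge n).trans (hτmono (Nat.le_succ n)))⟩
  obtain ⟨N, hNlt, hNmin⟩ : ∃ N : ℝ → ℕ, (∀ s, s < τ (N s + 1)) ∧
      (∀ (s : ℝ) (k : ℕ), s < τ (k + 1) → N s ≤ k) :=
    ⟨fun s => Nat.find (exN s), fun s => Nat.find_spec (exN s),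
      fun s k hk => Nat.find_min' (exN s) hk⟩
  have hNle : ∀ s, 0 ≤ s → τ (N s) ≤ s := by
    intro s hs
    by_cases h0 : N s = 0
    · rw [h0, hτ0]; exact hs
    · obtain ⟨k, hk⟩ := Nat.exists_eq_succ_of_ne_zero h0
      by_contra hcon
      push_neg at hcon
      have hk' : N s = k + 1 := hk
      have : N s ≤ k := hNmin s k (by rw [← hk']; exact hcon)
      omega
  have hNmono : ∀ s u : ℝ, s ≤ u → N s ≤ N u :=
    fun s u h => hNmin s (N u) (lt_of_le_of_lt h (hNlt u))
  have hNge : ∀ (M : ℕ) (s : ℝ), τ M ≤ s → M ≤ N s := by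
    intro M s h
    by_contra hc
    push_neg at hc
    have h2 : τ (N s + 1) ≤ τ M := hτmono (show N s + 1 ≤ M by omega)
    linarith [hNlt s]
  -- the curve
  obtain ⟨c, hcdef⟩ : ∃ c : ℝ → ℝ,
      ∀ s, c s = max 0 (min (s - τ (N s)) (d (x (N s)) (x (N s + 1)))) := ⟨_, fun _ => rfl⟩
  obtain ⟨γ, hγdef⟩ : ∃ γ : ℝ → X, ∀ s, γ s = g (N s) (c s) := ⟨_, fun _ => rfl⟩
  have hc0 : ∀ s, 0 ≤ c s := fun s => (hcdef s) ▸ le_max_left _ _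
  have hcd : ∀ s, c s ≤ d (x (N s)) (x (N s + 1)) := fun s =>
    (hcdef s) ▸ max_le (hpos _ _) (min_le_right _ _)
  have hcs : ∀ s, 0 ≤ s → c s ≤ s - τ (N s) := by
    intro s hs
    rw [hcdef s]
    exact max_le (by linarith [hNle s hs]) (min_le_left _ _)
  have G1 : ∀ s, d (x (N s)) (γ s) = c s := by
    intro s
    have h := hgd (N s) 0 (c s) le_rfl (hc0 s) (hcd s)
    rw [hg0 (N s)] at h
    rw [hγdef s, h, sub_zero]
  have G2 : ∀ s, d (γ s) (x (N s + 1)) = d (x (N s)) (x (N s + 1)) - c s := by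
    intro s
    have h := hgd (N s) (c s) (d (x (N s)) (x (N s + 1))) (hc0 s) (hcd s) le_rfl
    rw [hge (N s)] at h
    rw [hγdef s, h]
  have G3 : ∀ s, 0 ≤ s → d (γ s) (x (N s + 1)) ≤ τ (N s + 1) - s + (1/2:ℝ)^(N s + 1) := by
    intro s hs
    rw [G2 s]
    rcases le_total (s - τ (N s)) (d (x (N s)) (x (N s + 1))) with h | h
    · have hc : c s = s - τ (N s) := by
        rw [hcdef s, min_eq_left h, max_eq_right (by linarith [hNle s hs])]
      rw [hc]; linarith [(hdstep (N s)).1]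
    · have hc : c s = d (x (N s)) (x (N s + 1)) := by
        rw [hcdef s, min_eq_right h, max_eq_right (hpos _ _)]
      rw [hc]; simp only [sub_self]; linarith [hNlt s, e_pos (N s + 1)]
  have hξγ_le : ∀ s, 0 ≤ s → ξ (γ s) ≤ -s + (1/2:ℝ)^(N s + 1) := by
    intro s hs
    have h1 := hlip (γ s) (x (N s + 1))
    have h2 := G3 s hs
    linarith [hτn (N s + 1)]
  have hξγ_ge : ∀ s, 0 ≤ s → -s ≤ ξ (γ s) := by
    intro s hs
    have h1 := hlip (x (N s)) (γ s)
    rw [G1 s] at h1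
    have h2 := hcs s hs
    linarith [hτn (N s)]
  have hdbγ_ge : ∀ s, 0 ≤ s → s - (1/2:ℝ)^(N s + 1) ≤ d b (γ s) := by
    intro s hs; linarith [hxle (γ s), hξγ_le s hs]
  have hdbγ_le : ∀ s, 0 ≤ s → d b (γ s) ≤ s + 2*(1/2:ℝ)^(N s) := by
    intro s hs
    have h1 := htri b (x (N s)) (γ s)
    rw [G1 s] at h1
    linarith [hdb_le (N s), hcs s hs]
  -- segment estimate
  have hseg : ∀ s u : ℝ, 0 ≤ s → s ≤ u → d (γ s) (γ u) ≤ u - s + (1/2:ℝ)^(N s) := by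
    intro s u hs hsu
    have hu : 0 ≤ u := le_trans hs hsu
    rcases eq_or_lt_of_le (hNmono s u hsu) with h | h
    · -- same segment
      have hcu : c u = max 0 (min (u - τ (N s)) (d (x (N s)) (x (N s + 1)))) := by
        rw [hcdef u, ← h]
      have hγu : γ u = g (N s) (c u) := by rw [hγdef u, ← h]
      have hcc : c s ≤ c u := by
        rw [hcu, hcdef s]
        exact max_le_max le_rfl (min_le_min (by linarith) le_rfl)
      have hcud : c u ≤ d (x (N s)) (x (N s + 1)) := by
        rw [hcu]; exact max_le (hpos _ _) (min_le_right _ _)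
      have hd : d (γ s) (γ u) = c u - c s := by
        rw [hγdef s, hγu]
        exact hgd (N s) (c s) (c u) (hc0 s) hcc hcud
      rw [hd]
      rcases le_total (s - τ (N s)) (d (x (N s)) (x (N s + 1))) with hle | hle
      · have hcseq : c s = s - τ (N s) := by
          rw [hcdef s, min_eq_left hle, max_eq_right (by linarith [hNle s hs])]
        have hcule : c u ≤ u - τ (N s) := by
          rw [hcu]
          exact max_le (by linarith [hNle s hs]) (min_le_left _ _)
        rw [hcseq]
        linarith [e_pos (N s)]
      · have hcseq : c s = d (x (N s)) (x (N s + 1)) := by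
          rw [hcdef s, min_eq_right hle, max_eq_right (hpos _ _)]
        have : c u - c s ≤ 0 := by rw [hcseq]; linarith [hcud]
        linarith [e_pos (N s)]
    · -- different segments: N s < N u
      have h1 := htri (γ s) (x (N s + 1)) (γ u)
      have h2 := htri (x (N s + 1)) (x (N u)) (γ u)
      have h3 := G3 s hs
      have h4 := chain (N s + 1) (N u) h
      have h5 : d (x (N u)) (γ u) = c u := G1 u
      have h6 := hcs u hu
      have hpow : (1/2:ℝ)^(N s) = 2 * (1/2:ℝ)^(N s + 1) := by ring
      have h7 := hc0 u
      linarith [e_pos (N u)]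
  -- γ 0 = b
  have hN0 : N 0 = 0 := by
    have h01 : (0:ℝ) < τ (0 + 1) := by have := hτs 0; rw [hτ0] at this; linarith
    exact Nat.le_zero.1 (hNmin 0 0 h01)
  have hγ0 : γ 0 = b := by
    have hc00 : c 0 = 0 := by
      rw [hcdef 0, hN0, hτ0]
      rw [sub_zero, min_eq_left (hpos _ _), max_eq_left le_rfl]
    rw [hγdef 0, hc00, hN0, hg0 0, hx0]
  refine ⟨γ, ?_, ?_⟩
  · -- almost-geodesic property
    intro ε hε
    obtain ⟨M, hM⟩ : ∃ M : ℕ, (1/2:ℝ)^M < ε/4 :=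
      exists_pow_lt_of_lt_one (by positivity) (by norm_num)
    refine ⟨τ M, ?_⟩
    intro s u hTs hsu
    have hs : 0 ≤ s := le_trans (hτnonneg M) hTs
    have hu : 0 ≤ u := le_trans hs hsu
    have hMs : M ≤ N s := hNge M s hTs
    have hp1 : (1/2:ℝ)^(N s) ≤ (1/2:ℝ)^M :=
      pow_le_pow_of_le_one (by norm_num) (by norm_num) hMs
    have hp2 : (1/2:ℝ)^(N u + 1) ≤ (1/2:ℝ)^M :=
      pow_le_pow_of_le_one (by norm_num) (by norm_num)
        (le_trans hMs (le_trans (hNmono s u hsu) (Nat.le_succ _)))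
    rw [hγ0]
    have hub : d b (γ s) + d (γ s) (γ u) ≤ u + 3*(1/2:ℝ)^M := by
      linarith [hdbγ_le s hs, hseg s u hs hsu]
    have hlb : u - (1/2:ℝ)^M ≤ d b (γ s) + d (γ s) (γ u) := by
      linarith [htri b (γ s) (γ u), hdbγ_ge u hu]
    rw [abs_lt]
    constructor <;> linarith [e_pos M]
  · -- convergence to ξ
    intro w
    rw [Metric.tendsto_atTop]
    intro ε hε
    obtain ⟨k1, hk1⟩ : ∃ k : ℕ, (1/2:ℝ)^k < ε/4 :=
      exists_pow_lt_of_lt_one (by positivity) (by norm_num)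
    obtain ⟨k2, hk2⟩ := exists_nat_ge (dist b w)
    refine ⟨τ (max k1 k2 + 1), ?_⟩
    intro s hTs
    have hs : 0 ≤ s := le_trans (hτnonneg _) hTs
    have hMs : max k1 k2 + 1 ≤ N s := hNge _ s hTs
    obtain ⟨m, hm⟩ : ∃ m, N s = m + 1 := ⟨N s - 1, by omega⟩
    have hmk : k1 ≤ m ∧ k2 ≤ m := by omega
    have hwball : ∀ k : ℕ, m ≤ k → dist b w ≤ (k:ℝ) + 2 := by
      intro k hk
      calc dist b w ≤ (k2:ℝ) := hk2
        _ ≤ (k:ℝ) + 2 := by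
            have : (k2:ℝ) ≤ (k:ℝ) := Nat.cast_le.2 (le_trans hmk.2 hk)
            linarith
    have C1 := abs_lt.1 (A3 m w (hwball m le_rfl))
    have C2 := abs_lt.1 (A3 (N s) w (hwball (N s) (by omega)))
    -- upper bound
    have hup : d w (γ s) - d b (γ s) ≤ ξ w + 4*(1/2:ℝ)^(N s) := by
      have h1 := htri w (x (N s)) (γ s)
      rw [G1 s] at h1
      have h2 : d w (x (N s)) ≤ ξ w + d b (x (N s)) + (1/2:ℝ)^(N s) := by
        rw [hm]
        linarith [C1.2]
      have h3 := hdb_le (N s)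
      have h4 := hcs s hs
      have h5 := hdbγ_ge s hs
      have hpow : (1/2:ℝ)^(N s) = 2*(1/2:ℝ)^(N s + 1) := by ring
      linarith
    -- lower bound
    have hlo : ξ w - 3*(1/2:ℝ)^(N s) ≤ d w (γ s) - d b (γ s) := by
      have h1 := htri w (γ s) (x (N s + 1))
      have h2 : d b (x (N s + 1)) + ξ w - (1/2:ℝ)^(N s + 1) ≤ d w (x (N s + 1)) := by
        linarith [C2.1]
      have h3 := G3 s hs
      have h4 := hdb_ge (N s + 1)
      have h5 := hdbγ_le s hs
      have hpow : (1/2:ℝ)^(N s) = 2*(1/2:ℝ)^(N s + 1) := by ring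
      linarith
    have hp : (1/2:ℝ)^(N s) ≤ (1/2:ℝ)^k1 :=
      pow_le_pow_of_le_one (by norm_num) (by norm_num) (by omega)
    rw [Real.dist_eq, abs_lt]
    constructor <;> linarith [e_pos (N s)]
end

section
/- Let (X,d) be a possibly non-symmetric metric space such that the symmetrised metric d̂ is proper, geodesics exist between any two points, and d(x_n,x) → 0 iff d(x,x_n) → 0. Then the map φ : X → C(X), z ↦ φ_z (with φ_z(x) = d(x,z) − d(b,z)), is a homeomorphism onto its image, where C(X) carries the topology of uniform convergence on d̂-bounded sets; moreover, if a sequence (z_n) satisfies φ_{z_n} → φ_p for some p ∈ X, then z_n → p in X. -/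
/-!
By the triangle inequality `z ↦ φ_z` is `2`-Lipschitz for the sup distance. For the converse, suppose `φ_{z n} → φ_p` uniformly on bounded
sets but `d p (z n) ≥ ε` along the way. By the topology condition there is `t ∈ (0, ε)` such that
every point `x` with `d p x = t` also has `d x p < 1`; take such an `x` on a geodesic from `p` to
`z n`. It lies in a fixed bounded set, and on it `φ_{z n}(x) - φ_{z n}(p) = -t` while
`φ_p(x) - φ_p(p) = d x p ≥ 0`, which is incompatible with `t/2`-closeness of `φ_{z n}` and `φ_p`.
-/

open Filter Topology

theorem Filter.tendsto_comap_of_forall_seq {α β γ : Type*} {f : α → β} {g : α → γ}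
    {l₁ : Filter β} [l₁.IsCountablyGenerated] {l₂ : Filter γ}
    (h : ∀ u : ℕ → α, Tendsto (f ∘ u) atTop l₁ → Tendsto (g ∘ u) atTop l₂) :
    Tendsto g (comap f l₁) l₂ :=
  tendsto_iff_seq_tendsto.2 fun u hu => h u (tendsto_comap_iff.1 hu)

section NonSymmetricMetric

variable {X : Type*} {d : X → X → ℝ}

theorem exists_dist_eq_of_geodesic {x y : X}
    (hgeo : ∃ γ : ℝ → X, γ 0 = x ∧ γ (d x y) = y ∧
      ∀ s t : ℝ, 0 ≤ s → s ≤ t → t ≤ d x y → d (γ s) (γ t) = t - s)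
    {t : ℝ} (ht₀ : 0 ≤ t) (ht : t ≤ d x y) : ∃ w, d x w = t ∧ d w y = d x y - t := by
  obtain ⟨γ, hγ₀, hγ₁, hγ⟩ := hgeo
  refine ⟨γ t, ?_, ?_⟩
  · simpa [hγ₀] using hγ 0 t le_rfl ht₀ ht
  · simpa [hγ₁] using hγ t (d x y) ht₀ ht le_rfl

theorem horofunction_injective [MetricSpace X] (b : X) (hzero : ∀ x, d x x = 0)
    (hdist : ∀ x y : X, dist x y = d x y + d y x) :
    Function.Injective (fun z : X => fun x : X => d x z - d b z) := by
  intro z w h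
  have hz := congrFun h z
  have hw := congrFun h w
  simp only [hzero] at hz hw
  exact dist_eq_zero.1 (by linarith [hdist z w])

section Continuity

variable [PseudoMetricSpace X] (hpos : ∀ x y, 0 ≤ d x y) (htri : ∀ x y z, d x z ≤ d x y + d y z)
  (hdist : ∀ x y : X, dist x y = d x y + d y x)
include hpos htri hdist

theorem abs_sub_le_dist_of_triangle (x z w : X) : |d x z - d x w| ≤ dist z w := by
  rw [abs_sub_le_iff, hdist]
  constructor <;> linarith [htri x w z, htri x z w, hpos z w, hpos w z]

theorem tendstoUniformly_horofunction (b : X) {z : ℕ → X} {w : X}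
    (hz : Tendsto z atTop (𝓝 w)) :
    TendstoUniformly (fun n x => d x (z n) - d b (z n)) (fun x => d x w - d b w) atTop := by
  rw [Metric.tendstoUniformly_iff]
  intro ε hε
  filter_upwards [Metric.tendsto_nhds.1 hz (ε / 2) (half_pos hε)] with n hn x
  have hx := abs_le.1 (abs_sub_le_dist_of_triangle hpos htri hdist x w (z n))
  have hb := abs_le.1 (abs_sub_le_dist_of_triangle hpos htri hdist b w (z n))
  rw [dist_comm] at hn
  rw [Real.dist_eq, abs_lt]
  constructor <;> linarith

end Continuity

section Converse

variable [PseudoMetricSpace X] {b p : X} {z : ℕ → X}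
  (hpos : ∀ x y, 0 ≤ d x y) (hzero : ∀ x, d x x = 0) (htri : ∀ x y z, d x z ≤ d x y + d y z)
  (hdist : ∀ x y : X, dist x y = d x y + d y x)
  (hgeo : ∀ x y : X, ∃ γ : ℝ → X, γ 0 = x ∧ γ (d x y) = y ∧
    ∀ s t : ℝ, 0 ≤ s → s ≤ t → t ≤ d x y → d (γ s) (γ t) = t - s)
  (htop : ∀ u : ℕ → X, Tendsto (fun n => d p (u n)) atTop (𝓝 0) →
    Tendsto (fun n => d (u n) p) atTop (𝓝 0))
  (hconv : ∀ r : ℝ, TendstoUniformlyOn (fun n x => d x (z n) - d b (z n))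
    (fun x => d x p - d b p) atTop { x : X | dist b x ≤ r })
include hpos hzero htri hdist hgeo htop hconv

theorem eventually_lt_of_tendstoUniformlyOn_horofunction {ε : ℝ} (hε : 0 < ε) :
    ∀ᶠ n in atTop, d p (z n) < ε := by
  have hsmall : ∀ᶠ s in 𝓝 (0 : ℝ), ∀ y, d p y = s → d y p < 1 :=
    eventually_comap.1 <| (tendsto_comap_of_forall_seq htop).eventually (gt_mem_nhds one_pos)
  obtain ⟨t, hback, ht₀, htε⟩ :=
    ((hsmall.filter_mono nhdsWithin_le_nhds).and (Ioo_mem_nhdsGT hε)).exists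
  -- this ball contains `p` and every `x` with `d p x = t` and `d x p < 1`
  have hr := Metric.tendstoUniformlyOn_iff.1 (hconv (d b p + t + 1 + d p b)) (t / 2) (half_pos ht₀)
  filter_upwards [hr] with n hn
  by_contra! hεn
  obtain ⟨x, hpx, hxz⟩ := exists_dist_eq_of_geodesic (hgeo p (z n)) ht₀.le (htε.le.trans hεn)
  have hxp := hback x hpx
  have hx := hn x (by rw [hdist]; linarith [htri b p x, htri x p b])
  have hp := hn p (by rw [hdist]; linarith)
  rw [Real.dist_eq, abs_lt] at hx hp
  linarith [hpos x p, hzero p]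

theorem tendsto_of_tendstoUniformlyOn_horofunction : Tendsto z atTop (𝓝 p) := by
  have hfwd : Tendsto (fun n => d p (z n)) atTop (𝓝 0) :=
    tendsto_order.2 ⟨fun a ha => Eventually.of_forall fun n => ha.trans_le (hpos p (z n)),
      fun ε hε => eventually_lt_of_tendstoUniformlyOn_horofunction hpos hzero htri hdist hgeo htop
        hconv hε⟩
  rw [tendsto_iff_dist_tendsto_zero]
  simpa [hdist] using (htop z hfwd).add hfwd

end Converse

end NonSymmetricMetric

theorem horofunction_map_embedding_general {X : Type*} [MetricSpace X]
    (d : X → X → ℝ) (b : X)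
    (hpos : ∀ x y, 0 ≤ d x y) (hzero : ∀ x y, d x y = 0 ↔ x = y)
    (htri : ∀ x y z, d x z ≤ d x y + d y z)
    (hdist : ∀ x y : X, dist x y = d x y + d y x)
    (hgeo : ∀ x y : X, ∃ γ : ℝ → X, γ 0 = x ∧ γ (d x y) = y ∧
      ∀ s t : ℝ, 0 ≤ s → s ≤ t → t ≤ d x y → d (γ s) (γ t) = t - s)
    (htop : ∀ (x : X) (u : ℕ → X),
      Filter.Tendsto (fun n => d (u n) x) Filter.atTop (nhds 0) ↔
        Filter.Tendsto (fun n => d x (u n)) Filter.atTop (nhds 0)) :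
    Function.Injective (fun z : X => fun x : X => d x z - d b z) ∧
    (∀ (z : ℕ → X) (w : X), Filter.Tendsto z Filter.atTop (nhds w) →
      ∀ r : ℝ, TendstoUniformlyOn (fun n x => d x (z n) - d b (z n))
        (fun x => d x w - d b w) Filter.atTop { x : X | dist b x ≤ r }) ∧
    (∀ (z : ℕ → X) (p : X),
      (∀ r : ℝ, TendstoUniformlyOn (fun n x => d x (z n) - d b (z n))
        (fun x => d x p - d b p) Filter.atTop { x : X | dist b x ≤ r }) →
      Filter.Tendsto z Filter.atTop (nhds p)) := by
  have hself : ∀ x, d x x = 0 := fun x => (hzero x x).2 rfl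
  refine ⟨horofunction_injective b hself hdist, fun z w hz r => ?_, fun z p hconv => ?_⟩
  · exact (tendstoUniformly_horofunction hpos htri hdist b hz).tendstoUniformlyOn
  · exact tendsto_of_tendstoUniformlyOn_horofunction hpos hself htri hdist hgeo
      (fun u => (htop p u).2) hconv

/-- in a possibly non-symmetric metric space whose symmetrised metric is
proper, with geodesics for `d` and the topology condition, the map `z ↦ φ_z` is a
homeomorphism onto its image, where the target carries the topology of uniform
convergence on bounded sets: it is injective, continuous (convergent sequences are sent
to sequences converging uniformly on bounded sets), and if `φ_{z n} → φ_p` uniformly on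
bounded sets then `z n → p` in `X`. -/
theorem horofunction_map_embedding {X : Type*} [MetricSpace X]
    (d : X → X → ℝ) (b : X)
    (hpos : ∀ x y, 0 ≤ d x y) (hzero : ∀ x y, d x y = 0 ↔ x = y)
    (htri : ∀ x y z, d x z ≤ d x y + d y z)
    (hdist : ∀ x y : X, dist x y = d x y + d y x)
    (hproper : ProperSpace X)
    (hgeo : ∀ x y : X, ∃ γ : ℝ → X, γ 0 = x ∧ γ (d x y) = y ∧
      ∀ s t : ℝ, 0 ≤ s → s ≤ t → t ≤ d x y → d (γ s) (γ t) = t - s)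
    (htop : ∀ (x : X) (u : ℕ → X),
      Filter.Tendsto (fun n => d (u n) x) Filter.atTop (nhds 0) ↔
        Filter.Tendsto (fun n => d x (u n)) Filter.atTop (nhds 0)) :
    Function.Injective (fun z : X => fun x : X => d x z - d b z) ∧
    (∀ (z : ℕ → X) (w : X), Filter.Tendsto z Filter.atTop (nhds w) →
      ∀ r : ℝ, TendstoUniformlyOn (fun n x => d x (z n) - d b (z n))
        (fun x => d x w - d b w) Filter.atTop { x : X | dist b x ≤ r }) ∧
    (∀ (z : ℕ → X) (p : X),
      (∀ r : ℝ, TendstoUniformlyOn (fun n x => d x (z n) - d b (z n))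
        (fun x => d x p - d b p) Filter.atTop { x : X | dist b x ≤ r }) →
      Filter.Tendsto z Filter.atTop (nhds p)) :=
  horofunction_map_embedding_general d b hpos hzero htri hdist hgeo htop
end
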